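/- arXiv:2004.04111 — 2 statements merged into one kernel-verified Lean document; each statement's English description precedes it below -/
import Mathlib

section
/- Let V : ℝ³ → [0,∞) be a bounded, compactly supported probability density and, for each m ∈ ℕ, let w₁, …, w_m be independent random points in ℝ³, each distributed with density V (with respect to Lebesgue measure). Fix 0 < ν < 1/3 and L > 0, and set R_m = 1/(4πm). Then the probability of the event { min_{i≠j} |w_i − w_j| ≥ L m^ν R_m } tends to 1 as m → ∞. -/
/-! A union bound over ordered pairs. For independent points with a density bounded by `C`, the
probability that two given ones are closer than `ρ` is at most `sup_x μ(B(x, ρ)) ≤ C |B(0, ρ)|`,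
which is of order `C ρ³`. With `ρ = L m^ν / (4πm)` the `m²` pairs contribute
`m² ρ³ ≍ m^(3ν - 1)`, which tends to `0` exactly because `ν < 1/3`. -/

open MeasureTheory Metric Real
open scoped ENNReal Topology

noncomputable section

abbrev E3 := EuclideanSpace ℝ (Fin 3)

open ProbabilityTheory Filter Module

section Pairs

variable {Ω E : Type*} [MeasurableSpace Ω] {P : Measure Ω} [IsProbabilityMeasure P]
  [PseudoMetricSpace E] [MeasurableSpace E] [OpensMeasurableSpace E] [SecondCountableTopology E]
  {μ : Measure E} {r : ℝ} {c : ℝ≥0∞}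

theorem ProbabilityTheory.IndepFun.measure_dist_lt_le {f g : Ω → E}
    (hf : Measurable f) (hg : Measurable g) (hfg : IndepFun f g P)
    (hf_law : P.map f = μ) (hg_law : P.map g = μ) (hball : ∀ x, μ (ball x r) ≤ c) :
    P {ω | dist (f ω) (g ω) < r} ≤ c := by
  have : IsProbabilityMeasure μ := hf_law ▸ Measure.isProbabilityMeasure_map hf.aemeasurable
  have hmap : P.map (fun ω => (f ω, g ω)) = μ.prod μ := by
    rw [(indepFun_iff_map_prod_eq_prod_map_map hf.aemeasurable hg.aemeasurable).mp hfg,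
      hf_law, hg_law]
  have hs : MeasurableSet {p : E × E | dist p.1 p.2 < r} :=
    (isOpen_lt (continuous_fst.dist continuous_snd) continuous_const).measurableSet
  calc P {ω | dist (f ω) (g ω) < r}
      = μ.prod μ {p : E × E | dist p.1 p.2 < r} := by
        rw [← hmap, Measure.map_apply (hf.prodMk hg) hs]; rfl
    _ = ∫⁻ x, μ (ball x r) ∂μ := by
        rw [Measure.prod_apply hs]
        congr! 3 with x
        ext y
        simp [dist_comm]
    _ ≤ ∫⁻ _, c ∂μ := lintegral_mono hball
    _ = c := by simp

theorem ProbabilityTheory.iIndepFun.one_sub_le_measure_forall_le_dist {ι : Type*} [Fintype ι]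
    {X : ι → Ω → E} (hX : ∀ i, Measurable (X i)) (hind : iIndepFun X P)
    (hlaw : ∀ i, P.map (X i) = μ) (hball : ∀ x, μ (ball x r) ≤ c) :
    1 - (Fintype.card ι : ℝ≥0∞) ^ 2 * c ≤ P {ω | ∀ i j, i ≠ j → r ≤ dist (X i ω) (X j ω)} := by
  set bad := ⋃ p ∈ (Finset.univ : Finset ι).offDiag, {ω | dist (X p.1 ω) (X p.2 ω) < r}
  have hbad : P bad ≤ (Fintype.card ι : ℝ≥0∞) ^ 2 * c := calc
    P bad ≤ ∑ p ∈ (Finset.univ : Finset ι).offDiag, P {ω | dist (X p.1 ω) (X p.2 ω) < r} :=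
      measure_biUnion_finset_le _ _
    _ ≤ (Finset.univ : Finset ι).offDiag.card • c := by
      refine Finset.sum_le_card_nsmul _ _ _ fun p hp => ?_
      have hne : p.1 ≠ p.2 := (Finset.mem_offDiag.mp hp).2.2
      exact (hind.indepFun hne).measure_dist_lt_le (hX _) (hX _) (hlaw _) (hlaw _) hball
    _ ≤ (Fintype.card ι : ℝ≥0∞) ^ 2 * c := by
      rw [nsmul_eq_mul]
      gcongr
      norm_cast
      rw [Finset.offDiag_card, Finset.card_univ, sq]
      exact Nat.sub_le _ _
  have hcompl : badᶜ = {ω | ∀ i j, i ≠ j → r ≤ dist (X i ω) (X j ω)} := by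
    ext ω
    simp [bad]
  rw [← hcompl]
  calc 1 - (Fintype.card ι : ℝ≥0∞) ^ 2 * c ≤ 1 - P bad := tsub_le_tsub_left hbad 1
    _ ≤ P badᶜ := by
      rw [tsub_le_iff_left, ← measure_univ (μ := P), ← Set.union_compl_self bad]
      exact measure_union_le _ _

end Pairs

section Haar

variable {E : Type*} [NormedAddCommGroup E] [MeasurableSpace E] [BorelSpace E]
  (μ : Measure E) [μ.IsAddHaarMeasure]

theorem withDensity_ball_le_mul_ball_zero {f : E → ℝ≥0∞} {C : ℝ≥0∞} (hf : ∀ x, f x ≤ C)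
    (x : E) (r : ℝ) : μ.withDensity f (ball x r) ≤ C * μ (ball 0 r) :=
  calc μ.withDensity f (ball x r) ≤ μ.withDensity (fun _ => C) (ball x r) :=
        withDensity_mono (ae_of_all _ hf) _
    _ = C * μ (ball 0 r) := by
        rw [withDensity_const, Measure.smul_apply, smul_eq_mul, Measure.addHaar_ball_center]

variable [NormedSpace ℝ E] [FiniteDimensional ℝ E] [Nontrivial E]

theorem tendsto_natCast_sq_mul_addHaar_ball {ρ : ℕ → ℝ} (hρ : ∀ m, 0 ≤ ρ m)
    (h : Tendsto (fun m : ℕ => (m : ℝ) ^ 2 * ρ m ^ finrank ℝ E) atTop (𝓝 0)) :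
    Tendsto (fun m : ℕ => (m : ℝ≥0∞) ^ 2 * μ (ball 0 (ρ m))) atTop (𝓝 0) := by
  have heq : ∀ m : ℕ, (m : ℝ≥0∞) ^ 2 * μ (ball 0 (ρ m))
      = ENNReal.ofReal ((m : ℝ) ^ 2 * ρ m ^ finrank ℝ E) * μ (ball 0 1) := fun m => by
    rw [Measure.addHaar_ball μ 0 (hρ m), ENNReal.ofReal_mul (by positivity),
      ENNReal.ofReal_pow (Nat.cast_nonneg m), ENNReal.ofReal_natCast, mul_assoc]
  simp only [heq]
  simpa using
    ENNReal.Tendsto.mul_const (ENNReal.tendsto_ofReal h) (Or.inr measure_ball_lt_top.ne)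

end Haar

theorem tendsto_natCast_sq_mul_radius_pow_three {ν : ℝ} (hν : ν < 1 / 3) (L : ℝ) :
    Tendsto (fun m : ℕ => (m : ℝ) ^ 2 * (L * (m : ℝ) ^ ν * (1 / (4 * π * m))) ^ 3)
      atTop (𝓝 0) := by
  have hpow : Tendsto (fun m : ℕ => (m : ℝ) ^ (3 * ν - 1)) atTop (𝓝 0) := by
    have := (tendsto_rpow_neg_atTop (by linarith : 0 < 1 - 3 * ν)).comp
      tendsto_natCast_atTop_atTop
    simpa [Function.comp_def] using this
  have heq : ∀ᶠ m : ℕ in atTop, (L / (4 * π)) ^ 3 * (m : ℝ) ^ (3 * ν - 1)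
      = (m : ℝ) ^ 2 * (L * (m : ℝ) ^ ν * (1 / (4 * π * m))) ^ 3 := by
    filter_upwards [eventually_ge_atTop 1] with m hm
    have hm0 : (0 : ℝ) < m := by exact_mod_cast hm
    have hcube : (m : ℝ) ^ (3 * ν) = ((m : ℝ) ^ ν) ^ 3 := by
      rw [← Real.rpow_natCast, ← Real.rpow_mul hm0.le, mul_comm, Nat.cast_ofNat]
    rw [Real.rpow_sub hm0, Real.rpow_one, hcube]
    field_simp
  simpa using (hpow.const_mul _).congr' heq

theorem min_distance_probability_tendsto_one_general
    (Ω : Type*) [MeasurableSpace Ω] (P : Measure Ω) [IsProbabilityMeasure P]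
    (V : E3 → ℝ) (hVbdd : ∃ C : ℝ, ∀ x, V x ≤ C)
    (w : (m : ℕ) → Fin m → Ω → E3)
    (hmeas : ∀ m i, Measurable (w m i))
    (hlaw : ∀ m i, P.map (w m i) = volume.withDensity (fun x => ENNReal.ofReal (V x)))
    (hindep : ∀ m, ProbabilityTheory.iIndepFun (w m) P)
    (ν L : ℝ) (hν : ν < 1 / 3) (hL : 0 < L) :
    Filter.Tendsto
      (fun m : ℕ => P {ω | ∀ i j : Fin m, i ≠ j →
        L * (m : ℝ) ^ ν * (1 / (4 * π * m)) ≤ dist (w m i ω) (w m j ω)})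
      Filter.atTop (𝓝 1) := by
  obtain ⟨C, hC⟩ := hVbdd
  set ρ : ℕ → ℝ := fun m => L * (m : ℝ) ^ ν * (1 / (4 * π * m))
  have hρ : ∀ m, 0 ≤ ρ m := fun m => by positivity
  have hlower : ∀ m : ℕ, 1 - ENNReal.ofReal C * ((m : ℝ≥0∞) ^ 2 * volume (ball (0 : E3) (ρ m)))
      ≤ P {ω | ∀ i j : Fin m, i ≠ j → ρ m ≤ dist (w m i ω) (w m j ω)} := fun m => by
    have := (hindep m).one_sub_le_measure_forall_le_dist (hmeas m) (hlaw m)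
      (withDensity_ball_le_mul_ball_zero volume (fun x => ENNReal.ofReal_le_ofReal (hC x)) · (ρ m))
    simpa [mul_left_comm] using this
  have hsmall := tendsto_natCast_sq_mul_addHaar_ball (volume : Measure E3) hρ
    (by rw [finrank_euclideanSpace_fin]; exact tendsto_natCast_sq_mul_radius_pow_three hν L)
  refine tendsto_of_tendsto_of_tendsto_of_le_of_le ?_ tendsto_const_nhds hlower
    fun _ => prob_le_one
  simpa using ENNReal.Tendsto.sub tendsto_const_nhds
    (ENNReal.Tendsto.const_mul hsmall (Or.inr ENNReal.ofReal_ne_top)) (Or.inl ENNReal.one_ne_top)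

/-- Let `V` be a bounded, compactly supported probability density on `ℝ³`,
and for each `m` let `w m 0, …, w m (m-1)` be i.i.d. random points with density `V`.
With `R_m = 1/(4πm)` and `0 < ν < 1/3`, `L > 0`, the probability that all mutual distances
are at least `L m^ν R_m` tends to `1` as `m → ∞`. -/
theorem min_distance_probability_tendsto_one
    (Ω : Type*) [MeasurableSpace Ω] (P : Measure Ω) [IsProbabilityMeasure P]
    (V : E3 → ℝ) (hVmeas : Measurable V) (hVnonneg : ∀ x, 0 ≤ V x)
    (hVbdd : ∃ C : ℝ, ∀ x, V x ≤ C) (hVsupp : HasCompactSupport V)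
    (hVprob : ∫ x, V x = 1)
    (w : (m : ℕ) → Fin m → Ω → E3)
    (hmeas : ∀ m i, Measurable (w m i))
    (hlaw : ∀ m i, P.map (w m i) = volume.withDensity (fun x => ENNReal.ofReal (V x)))
    (hindep : ∀ m, ProbabilityTheory.iIndepFun (w m) P)
    (ν L : ℝ) (hν0 : 0 < ν) (hν : ν < 1 / 3) (hL : 0 < L) :
    Filter.Tendsto
      (fun m : ℕ => P {ω | ∀ i j : Fin m, i ≠ j →
        L * (m : ℝ) ^ ν * (1 / (4 * π * m)) ≤ dist (w m i ω) (w m j ω)})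
      Filter.atTop (𝓝 1) :=
  min_distance_probability_tendsto_one_general Ω P V hVbdd w hmeas hlaw hindep ν L hν hL
end
end

section
/- There is a universal constant C such that for all m ≥ 1 and all y, z ∈ ℝ³, ∫_{B_{R_m}(y)} (Gδ^m_z(x))² dx ≤ C m^{−3} / (|z − y|² + m^{−2}). -/
open MeasureTheory Metric Real
open scoped ENNReal Topology

noncomputable section

/-- The uniform probability measure on the sphere of radius `r` around `y` in `ℝ³`:
the 2-dimensional Hausdorff measure restricted to the sphere, normalized to total mass 1. -/
def sphereUniform (y : E3) (r : ℝ) : Measure E3 :=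
  ((μH[2] : Measure E3) (sphere y r))⁻¹ • (μH[2] : Measure E3).restrict (sphere y r)

/-- The Newtonian potential `Gδ_{y,r}(x) = ∫ (4π|x−z|)⁻¹ dδ_{y,r}(z)`. -/
def spherePotential (y : E3) (r : ℝ) (x : E3) : ℝ :=
  ∫ z, (4 * π * dist x z)⁻¹ ∂(sphereUniform y r)


/-! By Cauchy–Schwarz against the sub-probability measure `δ = δ_{z,R}`,
`Gδ(x)² ≤ ∫ |x - w|⁻² dδ(w)`, so by Tonelli it suffices to bound `∫_{B_R(y)} |x - w|⁻² dx`
uniformly in `w ∈ ∂B_R(z)`. If `|z - y| ≤ 4R`, the ball `B_R(y)` lies in `B_{6R}(w)`, and polar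
coordinates give `∫_{B_ρ(w)} |x - w|⁻² dx = 3ρ |B_1|`. Otherwise `|x - w| ≥ |z - y| / 2` on
`B_R(y)`, so the integral is at most `4 |B_R| / |z - y|²`. Both bounds are
`O(R³ / (|z - y|² + R²))`, and `R ↦ R³ / (|z - y|² + R²)` is increasing, with `R_m ≤ 1 / m`. -/

open Module

theorem lintegral_sq_le_of_measure_univ_le_one {α : Type*} [MeasurableSpace α] {μ : Measure α}
    (hμ : μ Set.univ ≤ 1) {f : α → ℝ≥0∞} (hf : AEMeasurable f μ) :
    (∫⁻ a, f a ∂μ) ^ 2 ≤ ∫⁻ a, f a ^ 2 ∂μ := by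
  have hCS := ENNReal.lintegral_mul_le_Lp_mul_Lq μ Real.HolderConjugate.two_two hf
    (aemeasurable_const (b := (1 : ℝ≥0∞)))
  simp only [Pi.mul_apply, mul_one, one_pow, lintegral_const, one_mul,
    ENNReal.rpow_two, one_div] at hCS
  have hsqrt_sq (x : ℝ≥0∞) : (x ^ (2⁻¹ : ℝ)) ^ 2 = x := by
    simpa using ENNReal.rpow_inv_natCast_pow two_ne_zero x
  calc (∫⁻ a, f a ∂μ) ^ 2
      ≤ ((∫⁻ a, f a ^ 2 ∂μ) ^ (2⁻¹ : ℝ) * μ Set.univ ^ (2⁻¹ : ℝ)) ^ 2 := by gcongr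
    _ = (∫⁻ a, f a ^ 2 ∂μ) * μ Set.univ := by
        rw [mul_pow, hsqrt_sq, hsqrt_sq]
    _ ≤ ∫⁻ a, f a ^ 2 ∂μ := mul_le_of_le_one_right' hμ

theorem integral_le_of_lintegral_enorm_le {α : Type*} [MeasurableSpace α] {μ : Measure α}
    {f : α → ℝ} {b : ℝ} (hb : 0 ≤ b) (h : ∫⁻ a, ‖f a‖ₑ ∂μ ≤ ENNReal.ofReal b) :
    ∫ a, f a ∂μ ≤ b := by
  have := (enorm_integral_le_lintegral_enorm f).trans h
  rw [Real.enorm_eq_ofReal_abs, ENNReal.ofReal_le_ofReal_iff hb] at this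
  exact (le_abs_self _).trans this

theorem pow_three_div_add_sq_le {a b c : ℝ} (ha : 0 < a) (hab : a ≤ b) (hc : 0 ≤ c) :
    a ^ 3 / (c + a ^ 2) ≤ b ^ 3 / (c + b ^ 2) := by
  have hb : 0 < b := ha.trans_le hab
  rw [div_le_div_iff₀ (by positivity) (by positivity)]
  nlinarith [pow_le_pow_left₀ ha.le hab 3, mul_nonneg (mul_nonneg (sq_nonneg a) (sq_nonneg b))
    (sub_nonneg.2 hab)]

section HaarBall

variable {E : Type*} [NormedAddCommGroup E] [NormedSpace ℝ E] [FiniteDimensional ℝ E]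
  [MeasurableSpace E] [BorelSpace E] (μ : Measure E) [μ.IsAddHaarMeasure]

theorem integrableOn_ball_zero_inv_norm_pow {k : ℕ} (hk : k < finrank ℝ E) (r : ℝ) :
    IntegrableOn (fun x : E => (‖x‖ ^ k)⁻¹) (ball 0 r) μ := by
  have : Nontrivial E := Module.nontrivial_of_finrank_pos (R := ℝ) (by omega)
  refine (integrableOn_fun_norm_addHaar μ (f := fun t => (t ^ k)⁻¹)).2 ?_
  refine ((continuous_pow (finrank ℝ E - 1 - k)).integrableOn_Icc.mono_set
    Set.Ioo_subset_Icc_self).congr_fun (fun y (hy : y ∈ Set.Ioo 0 r) => ?_) measurableSet_Ioo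
  exact pow_sub₀ _ hy.1.ne' (by omega : k ≤ finrank ℝ E - 1)

theorem integral_ball_zero_inv_norm_pow {k : ℕ} (hk : k < finrank ℝ E) {r : ℝ} (hr : 0 ≤ r) :
    ∫ x in ball (0 : E) r, (‖x‖ ^ k)⁻¹ ∂μ =
      finrank ℝ E / (finrank ℝ E - k) * r ^ (finrank ℝ E - k) * μ.real (ball 0 1) := by
  have : Nontrivial E := Module.nontrivial_of_finrank_pos (R := ℝ) (by omega)
  set n := finrank ℝ E
  calc ∫ x in ball (0 : E) r, (‖x‖ ^ k)⁻¹ ∂μ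
      = ∫ x, (Set.Iio r).indicator (fun t : ℝ => (t ^ k)⁻¹) ‖x‖ ∂μ := by
        rw [← integral_indicator measurableSet_ball]
        congr 1 with x
        simp [Set.indicator]
    _ = n * μ.real (ball 0 1) * ∫ y in Set.Ioo 0 r, y ^ (n - 1 - k) := by
        rw [integral_fun_norm_addHaar, nsmul_eq_mul, smul_eq_mul, mul_assoc]
        congr 2
        rw [← Set.Ioi_inter_Iio, ← setIntegral_indicator measurableSet_Iio]
        refine setIntegral_congr_fun measurableSet_Ioi fun y (hy : 0 < y) => ?_
        by_cases hyr : y < r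
        · have hyr : y ∈ Set.Iio r := hyr
          rw [Set.indicator_of_mem hyr, Set.indicator_of_mem hyr, smul_eq_mul,
            pow_sub₀ _ hy.ne' (by omega : k ≤ n - 1)]
        · simp [hyr]
    _ = _ := by
        rw [← integral_Ioc_eq_integral_Ioo, ← intervalIntegral.integral_of_le hr, integral_pow]
        have hexp : n - 1 - k + 1 = n - k := by omega
        have hcast : ((n - 1 - k : ℕ) : ℝ) + 1 = n - k := by
          rw [Nat.sub_sub, Nat.cast_sub (by omega)]; push_cast; ring
        rw [hexp, hcast, zero_pow (by omega), sub_zero]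
        field_simp

theorem lintegral_ball_inv_dist_pow {k : ℕ} (hk : k < finrank ℝ E) (w : E) {r : ℝ}
    (hr : 0 ≤ r) :
    ∫⁻ x in ball w r, ENNReal.ofReal ((dist x w ^ k)⁻¹) ∂μ =
      ENNReal.ofReal (finrank ℝ E / (finrank ℝ E - k) * r ^ (finrank ℝ E - k)) *
        μ (ball 0 1) := by
  calc ∫⁻ x in ball w r, ENNReal.ofReal ((dist x w ^ k)⁻¹) ∂μ
      = ∫⁻ x in ball 0 r, ENNReal.ofReal ((‖x‖ ^ k)⁻¹) ∂μ := by
        rw [← lintegral_indicator measurableSet_ball, ← lintegral_indicator measurableSet_ball]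
        conv_rhs => rw [← lintegral_sub_right_eq_self _ w]
        congr 1 with x
        simp only [Set.indicator, mem_ball_iff_norm, sub_zero, dist_eq_norm]
    _ = ENNReal.ofReal (∫ x in ball 0 r, (‖x‖ ^ k)⁻¹ ∂μ) :=
        (ofReal_integral_eq_lintegral_ofReal (integrableOn_ball_zero_inv_norm_pow μ hk r)
          (ae_of_all _ fun x => by positivity)).symm
    _ = _ := by
        have hcoef : (0 : ℝ) ≤ finrank ℝ E / (finrank ℝ E - k) :=
          div_nonneg (Nat.cast_nonneg _) (sub_nonneg.2 (by exact_mod_cast hk.le))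
        rw [integral_ball_zero_inv_norm_pow μ hk hr,
          ENNReal.ofReal_mul (mul_nonneg hcoef (pow_nonneg hr _)),
          measureReal_def, ENNReal.ofReal_toReal measure_ball_lt_top.ne]

-- The constant `306 = 18 · 17` comes from the case `dist z y ≤ 4 * R`.
theorem lintegral_ball_inv_dist_sq_le (hE : finrank ℝ E = 3) {y z w : E} {R : ℝ} (hR : 0 < R)
    (hw : dist w z ≤ R) :
    ∫⁻ x in ball y R, ENNReal.ofReal ((dist x w ^ 2)⁻¹) ∂μ ≤
      ENNReal.ofReal (306 * R ^ 3 / (dist z y ^ 2 + R ^ 2)) * μ (ball 0 1) := by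
  set d := dist z y
  have hden : 0 < d ^ 2 + R ^ 2 := by positivity
  rcases le_or_gt d (4 * R) with hnear | hfar
  · have hsub : ball y R ⊆ ball w (6 * R) := ball_subset_ball' (by
      linarith [dist_triangle y z w, dist_comm y z, dist_comm w z])
    calc ∫⁻ x in ball y R, ENNReal.ofReal ((dist x w ^ 2)⁻¹) ∂μ
        ≤ ∫⁻ x in ball w (6 * R), ENNReal.ofReal ((dist x w ^ 2)⁻¹) ∂μ := lintegral_mono_set hsub
      _ = ENNReal.ofReal (18 * R) * μ (ball 0 1) := by
        rw [lintegral_ball_inv_dist_pow μ (by omega) w (by positivity), hE]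
        congr 2
        norm_num
        ring
      _ ≤ _ := by
        gcongr
        rw [le_div_iff₀ hden]
        nlinarith [mul_le_mul_of_nonneg_left (pow_le_pow_left₀ dist_nonneg hnear 2) hR.le]
  · have : Nontrivial E := Module.nontrivial_of_finrank_pos (R := ℝ) (by omega)
    have hd : 0 < d := by linarith
    have hbound : ∀ x ∈ ball y R,
        ENNReal.ofReal ((dist x w ^ 2)⁻¹) ≤ ENNReal.ofReal (4 / d ^ 2) := by
      intro x hx
      have hxw : d / 2 ≤ dist x w := by
        linarith [dist_triangle z w y, dist_triangle w x y, mem_ball.1 hx, dist_comm w x,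
          dist_comm w z]
      apply ENNReal.ofReal_le_ofReal
      rw [← inv_div, show d ^ 2 / 4 = (d / 2) ^ 2 by ring]
      exact inv_anti₀ (by positivity) (pow_le_pow_left₀ (by positivity) hxw 2)
    calc ∫⁻ x in ball y R, ENNReal.ofReal ((dist x w ^ 2)⁻¹) ∂μ
        ≤ ∫⁻ x in ball y R, ENNReal.ofReal (4 / d ^ 2) ∂μ :=
          setLIntegral_mono measurable_const hbound
      _ = ENNReal.ofReal (4 / d ^ 2 * R ^ 3) * μ (ball 0 1) := by
        rw [setLIntegral_const, Measure.addHaar_ball _ _ hR.le, hE, ← mul_assoc,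
          ENNReal.ofReal_mul (by positivity)]
      _ ≤ _ := by
        gcongr
        rw [div_mul_eq_mul_div, div_le_div_iff₀ (by positivity) hden]
        nlinarith [pow_pos hR 3, mul_le_mul_of_nonneg_left
          (pow_le_pow_left₀ (by positivity) hfar.le 2) (pow_pos hR 3).le]

end HaarBall

theorem sphereUniform_univ_le (y : E3) (r : ℝ) : sphereUniform y r Set.univ ≤ 1 := by
  rw [sphereUniform, Measure.smul_apply, Measure.restrict_apply_univ, smul_eq_mul]
  exact ENNReal.inv_mul_le_one _

instance (y : E3) (r : ℝ) : IsFiniteMeasure (sphereUniform y r) :=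
  ⟨(sphereUniform_univ_le y r).trans_lt ENNReal.one_lt_top⟩

theorem sphereUniform_ae_mem (y : E3) (r : ℝ) :
    ∀ᵐ w ∂(sphereUniform y r), w ∈ sphere y r :=
  Measure.ae_smul_measure (ae_restrict_mem isClosed_sphere.measurableSet) _

theorem enorm_inv_four_pi_mul_sq_le (t : ℝ) :
    ‖(4 * π * t)⁻¹‖ₑ ^ 2 ≤ ENNReal.ofReal ((t ^ 2)⁻¹) := by
  rw [← enorm_pow, Real.enorm_of_nonneg (sq_nonneg _)]
  apply ENNReal.ofReal_le_ofReal
  rw [inv_pow, mul_pow, mul_inv]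
  exact mul_le_of_le_one_left (by positivity) (inv_le_one_of_one_le₀ (by nlinarith [pi_gt_three]))

theorem enorm_spherePotential_sq_le (z : E3) (r : ℝ) (x : E3) :
    ‖spherePotential z r x ^ 2‖ₑ ≤
      ∫⁻ w, ENNReal.ofReal ((dist x w ^ 2)⁻¹) ∂(sphereUniform z r) :=
  calc ‖spherePotential z r x ^ 2‖ₑ
      = ‖spherePotential z r x‖ₑ ^ 2 := enorm_pow _ _
    _ ≤ (∫⁻ w, ‖(4 * π * dist x w)⁻¹‖ₑ ∂(sphereUniform z r)) ^ 2 := by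
        gcongr; exact enorm_integral_le_lintegral_enorm _
    _ ≤ ∫⁻ w, ‖(4 * π * dist x w)⁻¹‖ₑ ^ 2 ∂(sphereUniform z r) :=
        lintegral_sq_le_of_measure_univ_le_one (sphereUniform_univ_le z r) (by fun_prop)
    _ ≤ _ := lintegral_mono fun w => enorm_inv_four_pi_mul_sq_le _

theorem lintegral_ball_enorm_spherePotential_sq_le (y z : E3) {R : ℝ} (hR : 0 < R) :
    ∫⁻ x in ball y R, ‖spherePotential z R x ^ 2‖ₑ ≤
      ENNReal.ofReal (306 * R ^ 3 / (dist z y ^ 2 + R ^ 2)) * volume (ball (0 : E3) 1) :=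
  calc ∫⁻ x in ball y R, ‖spherePotential z R x ^ 2‖ₑ
      ≤ ∫⁻ x in ball y R, ∫⁻ w, ENNReal.ofReal ((dist x w ^ 2)⁻¹) ∂(sphereUniform z R) :=
        lintegral_mono fun x => enorm_spherePotential_sq_le z R x
    _ = ∫⁻ w, (∫⁻ x in ball y R, ENNReal.ofReal ((dist x w ^ 2)⁻¹)) ∂(sphereUniform z R) :=
        lintegral_lintegral_swap ((measurable_dist.pow_const 2).inv.ennreal_ofReal).aemeasurable
    _ ≤ ∫⁻ _, ENNReal.ofReal (306 * R ^ 3 / (dist z y ^ 2 + R ^ 2)) * volume (ball (0 : E3) 1)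
          ∂(sphereUniform z R) := by
        refine lintegral_mono_ae ?_
        filter_upwards [sphereUniform_ae_mem z R] with w hw
        exact lintegral_ball_inv_dist_sq_le volume finrank_euclideanSpace_fin hR hw.le
    _ ≤ _ := by
        rw [lintegral_const]
        exact mul_le_of_le_one_right' (sphereUniform_univ_le z R)

/-- There is a universal constant `C` such that for all `m ≥ 1` and all
`y, z ∈ ℝ³`, `∫_{B_{R_m}(y)} (Gδ^m_z(x))² dx ≤ C m⁻³ / (|z−y|² + m⁻²)`, where `δ^m_z` is
the uniform probability measure on `∂B_{R_m}(z)` and `R_m = 1/(4πm)`. -/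
theorem spherePotential_sq_integral_ball_bound :
    ∃ C : ℝ, ∀ m : ℕ, 1 ≤ m → ∀ y z : E3,
      ∫ x in ball y (1 / (4 * π * m)), (spherePotential z (1 / (4 * π * m)) x) ^ 2 ≤
        C * ((m : ℝ) ^ 3)⁻¹ / (dist z y ^ 2 + ((m : ℝ) ^ 2)⁻¹) := by
  set V := (volume (ball (0 : E3) 1)).toReal
  refine ⟨306 * V, fun m hm y z => ?_⟩
  have hm0 : (0 : ℝ) < m := by exact_mod_cast hm
  set R := 1 / (4 * π * m)
  have hR : 0 < R := by positivity
  have hRm : R ≤ (m : ℝ)⁻¹ := by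
    rw [← one_div]
    exact one_div_le_one_div_of_le hm0 (le_mul_of_one_le_left hm0.le (by linarith [pi_gt_three]))
  refine integral_le_of_lintegral_enorm_le (by positivity) ?_
  calc ∫⁻ x in ball y R, ‖spherePotential z R x ^ 2‖ₑ
      ≤ ENNReal.ofReal (306 * R ^ 3 / (dist z y ^ 2 + R ^ 2)) * volume (ball (0 : E3) 1) :=
        lintegral_ball_enorm_spherePotential_sq_le y z hR
    _ = ENNReal.ofReal (306 * (R ^ 3 / (dist z y ^ 2 + R ^ 2)) * V) := by
        rw [ENNReal.ofReal_mul (by positivity), ENNReal.ofReal_toReal measure_ball_lt_top.ne,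
          mul_div_assoc]
    _ ≤ ENNReal.ofReal (306 * V * ((m : ℝ) ^ 3)⁻¹ / (dist z y ^ 2 + ((m : ℝ) ^ 2)⁻¹)) := by
        rw [show 306 * V * ((m : ℝ) ^ 3)⁻¹ / (dist z y ^ 2 + ((m : ℝ) ^ 2)⁻¹) =
          306 * ((m : ℝ)⁻¹ ^ 3 / (dist z y ^ 2 + (m : ℝ)⁻¹ ^ 2)) * V by rw [inv_pow, inv_pow]; ring]
        gcongr ENNReal.ofReal (306 * ?_ * V)
        exact pow_three_div_add_sq_le hR hRm (sq_nonneg _)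
end
end
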